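/- Dowker duality for 0-dimensional homology at a fixed parameter: the Dowker complexes D_{U,V}^ε and D_{V,U}^ε have the same number of connected components, provided both are nonempty. Equivalently, the bipartite relation R_ε = {(u,v) : d(u,v) ≤ ε} induces a bijection between the connected components of D_{U,V}^ε and those of D_{V,U}^ε. -/

import Mathlib

/-!
Every vertex `u` of `D_{U,V}^ε` has a witness `v ∈ V`, and `v` is in turn a vertex of
`D_{V,U}^ε`, witnessed by `u`. Two points of `V` within `ε` of a common point of `U` are
adjacent (or equal) in `D_{V,U}^ε`, so witnesses of adjacent vertices lie in one component
and a choice of witnesses induces a map on components. Going there and back sends `u` to a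
vertex sharing the witness `v` with `u`, hence into the component of `u`: the two induced
maps are mutually inverse.
-/

/-- The 1-skeleton of the Dowker complex `D_{U,V}^ε`: its vertices are the
points of `U` admitting an `ε`-witness in `V`, and two vertices are adjacent
iff some `v ∈ V` is within `ε` of both. -/
def dowkerGraph {X : Type*} [MetricSpace X] (U V : Finset X) (ε : ℝ) :
    SimpleGraph {u : X // u ∈ U ∧ ∃ v ∈ V, dist u v ≤ ε} :=
  SimpleGraph.fromRel (fun a b => ∃ v ∈ V, dist a.1 v ≤ ε ∧ dist b.1 v ≤ ε)

namespace dowkerGraph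

open SimpleGraph

variable {X : Type*} [MetricSpace X] {U V : Finset X} {ε : ℝ}

theorem reachable_of_dist_le {a b : {u : X // u ∈ U ∧ ∃ v ∈ V, dist u v ≤ ε}} {v : X}
    (hv : v ∈ V) (ha : dist a.1 v ≤ ε) (hb : dist b.1 v ≤ ε) :
    (dowkerGraph U V ε).Reachable a b := by
  rcases eq_or_ne a b with rfl | hne
  · rfl
  · exact Adj.reachable ((fromRel_adj _ _ _).2 ⟨hne, Or.inl ⟨v, hv, ha, hb⟩⟩)

variable (U V ε) in
noncomputable def witness (u : {u : X // u ∈ U ∧ ∃ v ∈ V, dist u v ≤ ε}) :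
    {v : X // v ∈ V ∧ ∃ u ∈ U, dist v u ≤ ε} :=
  ⟨u.2.2.choose, u.2.2.choose_spec.1, u.1, u.2.1, dist_comm u.1 _ ▸ u.2.2.choose_spec.2⟩

theorem dist_witness_le (u : {u : X // u ∈ U ∧ ∃ v ∈ V, dist u v ≤ ε}) :
    dist u.1 (witness U V ε u).1 ≤ ε :=
  u.2.2.choose_spec.2

theorem reachable_witness_of_adj {a b : {u : X // u ∈ U ∧ ∃ v ∈ V, dist u v ≤ ε}}
    (h : (dowkerGraph U V ε).Adj a b) :
    (dowkerGraph V U ε).Reachable (witness U V ε a) (witness U V ε b) := by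
  obtain ⟨-, ⟨v, hvV, hav, hbv⟩ | ⟨v, hvV, hbv, hav⟩⟩ := (fromRel_adj _ _ _).1 h <;>
  · let w : {v : X // v ∈ V ∧ ∃ u ∈ U, dist v u ≤ ε} :=
      ⟨v, hvV, a.1, a.2.1, dist_comm a.1 v ▸ hav⟩
    have ha : (dowkerGraph V U ε).Reachable (witness U V ε a) w :=
      reachable_of_dist_le a.2.1 (dist_comm a.1 _ ▸ dist_witness_le a)
        (dist_comm a.1 v ▸ hav)
    have hb : (dowkerGraph V U ε).Reachable w (witness U V ε b) :=
      reachable_of_dist_le b.2.1 (dist_comm b.1 v ▸ hbv)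
        (dist_comm b.1 _ ▸ dist_witness_le b)
    exact ha.trans hb

theorem reachable_witness {a b : {u : X // u ∈ U ∧ ∃ v ∈ V, dist u v ≤ ε}}
    (p : (dowkerGraph U V ε).Walk a b) :
    (dowkerGraph V U ε).Reachable (witness U V ε a) (witness U V ε b) := by
  induction p with
  | nil => rfl
  | cons h _ ih => exact (reachable_witness_of_adj h).trans ih

variable (U V ε) in
noncomputable def componentMap :
    (dowkerGraph U V ε).ConnectedComponent → (dowkerGraph V U ε).ConnectedComponent :=
  ConnectedComponent.lift (fun u => connectedComponentMk _ (witness U V ε u))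
    fun _ _ p _ => ConnectedComponent.sound (reachable_witness p)

theorem componentMap_componentMap (c : (dowkerGraph U V ε).ConnectedComponent) :
    componentMap V U ε (componentMap U V ε c) = c := by
  induction c using ConnectedComponent.ind with
  | h u =>
    let v := witness U V ε u
    exact ConnectedComponent.sound <| reachable_of_dist_le v.2.1
      (dist_comm v.1 _ ▸ dist_witness_le v) (dist_witness_le u)

variable (U V ε) in
noncomputable def componentEquiv :
    (dowkerGraph U V ε).ConnectedComponent ≃ (dowkerGraph V U ε).ConnectedComponent where
  toFun := componentMap U V ε
  invFun := componentMap V U ε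
  left_inv := componentMap_componentMap
  right_inv := componentMap_componentMap

end dowkerGraph

theorem dowker_duality_connectedComponents_general {X : Type*} [MetricSpace X]
    (U V : Finset X) (ε : ℝ) :
    Nat.card (dowkerGraph U V ε).ConnectedComponent =
      Nat.card (dowkerGraph V U ε).ConnectedComponent :=
  Nat.card_congr (dowkerGraph.componentEquiv U V ε)

/-- Dowker duality for 0-dimensional homology at a fixed parameter: if both
`D_{U,V}^ε` and `D_{V,U}^ε` are nonempty, they have the same number of
connected components. -/
theorem dowker_duality_connectedComponents {X : Type*} [MetricSpace X]
    (U V : Finset X) (ε : ℝ)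
    (hUV : ∃ u ∈ U, ∃ v ∈ V, dist u v ≤ ε)
    (hVU : ∃ v ∈ V, ∃ u ∈ U, dist v u ≤ ε) :
    Nat.card (dowkerGraph U V ε).ConnectedComponent =
      Nat.card (dowkerGraph V U ε).ConnectedComponent :=
  dowker_duality_connectedComponents_general U V ε
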